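/- Under the hypotheses (EC-1)–(EC-4), the existence of an auxiliary seminorm, and the hylomorphy condition inf{ E(u)/|C(u)| : C(u) ≠ 0 } < Λ₀, there exists δ̄ > 0 such that for every δ ∈ (0, δ̄) the functional J_δ(u) = E(u)/|C(u)| + δ(E(u) + 2a|C(u)|^s), defined on { u : C(u) ≠ 0 }, attains its infimum, every minimizing sequence of J_δ is G-compact, and there exists c_δ ∈ ℝ^l with c_δ ≠ 0 such that the minimum e_δ = min{ E(u) : C(u) = c_δ } exists and is attained, the set Γ_δ of minimizers of E on { u : C(u) = c_δ } is G-compact, and every element of Γ_δ minimizes J_δ. -/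

import Mathlib

/-!
Fix `δ` and let `m` be the infimum of `J_δ`. For small `δ` the hylomorphy condition puts `m`
below a level `Λ < Λ₀`, so a minimizing sequence stays away from `0` in the auxiliary seminorm,
is bounded by coercivity, and after translation by `G` has a weak limit `x ≠ 0`. Splitting `E`
and `‖C‖` along `y n = x + (y n - x)`, the strict subadditivity of `j_δ(e, t)` (superadditivity
of `t ↦ t ^ s` plus the mediant inequality) forbids the remainder `y n - x` to keep any energy,
so `y n → x` strongly and `x` minimizes `J_δ`. Since `j_δ` is increasing in `e`, a minimizer of
`J_δ` with charge `c` also minimizes `E` on `{C = c}`.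
-/

open Filter Topology

/-- A sequence `u` in `X` is `G`-compact if there are a subsequence `u ∘ φ` and group
elements `g k` such that `g k • u (φ k)` converges. -/
def GCompactSeq {X G : Type*} [TopologicalSpace X] [Group G] [MulAction G X]
    (u : ℕ → X) : Prop :=
  ∃ φ : ℕ → ℕ, StrictMono φ ∧ ∃ g : ℕ → G, ∃ x : X,
    Tendsto (fun k => g k • u (φ k)) atTop (𝓝 x)

/-- A closed `G`-invariant set `Γ` is `G`-compact if every sequence in `Γ` is
`G`-compact. -/
def GCompactSet {X G : Type*} [TopologicalSpace X] [Group G] [MulAction G X]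
    (Γ : Set X) : Prop :=
  IsClosed Γ ∧ (∀ g : G, ∀ u ∈ Γ, g • u ∈ Γ) ∧
    ∀ u : ℕ → X, (∀ n, u n ∈ Γ) → GCompactSeq (G := G) u

/-- A functional `F` on `X` has the splitting property if for every `u ∈ X` and every
sequence `(w n)` converging weakly to `0`, `F (u + w n) = F u + F (w n) + o(1)`. -/
def SplittingProperty {X : Type*} [NormedAddCommGroup X] [NormedSpace ℝ X]
    (F : X → ℝ) : Prop :=
  ∀ (u : X) (w : ℕ → X),
    (∀ f : X →L[ℝ] ℝ, Tendsto (fun n => f (w n)) atTop (𝓝 0)) →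
    Tendsto (fun n => F (u + w n) - F u - F (w n)) atTop (𝓝 0)

/-- The real function `j_δ(e, t)`; the paper's functional is `J_δ u = j_δ(E u, ‖C u‖)`. -/
noncomputable def penalizedRatio (a s δ e t : ℝ) : ℝ := e / t + δ * (e + 2 * a * t ^ s)

section PenalizedRatio

variable {a s δ e t : ℝ}

lemma penalizedRatio_strictMono (hδ : 0 ≤ δ) (ht : 0 < t) :
    StrictMono fun e => penalizedRatio a s δ e t := by
  intro e e' h
  have := mul_le_mul_of_nonneg_left (add_le_add_right h.le (2 * a * t ^ s)) hδ
  have := div_lt_div_of_pos_right h ht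
  simp only [penalizedRatio]
  linarith

lemma div_le_penalizedRatio (ha : 0 ≤ a) (hδ : 0 ≤ δ) (ht : 0 ≤ t) (he : 0 ≤ e + a * t ^ s) :
    e / t ≤ penalizedRatio a s δ e t := by
  have : 0 ≤ a * t ^ s := mul_nonneg ha (Real.rpow_nonneg ht s)
  have : 0 ≤ δ * (e + 2 * a * t ^ s) := mul_nonneg hδ (by linarith)
  simp only [penalizedRatio]
  linarith

lemma add_mul_rpow_mul_sub_one_le_penalizedRatio (ht : 0 < t) (he : 0 ≤ e + a * t ^ s) :
    δ * (e + a * t ^ s) + a * t ^ (s - 1) * (δ * t - 1) ≤ penalizedRatio a s δ e t := by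
  have hj : penalizedRatio a s δ e t =
      δ * (e + a * t ^ s) + a * t ^ (s - 1) * (δ * t - 1) + (e + a * t ^ s) / t := by
    simp only [penalizedRatio, Real.rpow_sub_one ht.ne']
    field_simp
    ring
  rw [hj]
  linarith [div_nonneg he ht.le]

lemma neg_mul_inv_rpow_le (ha : 0 ≤ a) (hs : 1 ≤ s) (hδ : 0 < δ) (ht : 0 ≤ t) :
    -(a * δ⁻¹ ^ (s - 1)) ≤ a * t ^ (s - 1) * (δ * t - 1) := by
  have hpow : 0 ≤ t ^ (s - 1) := Real.rpow_nonneg ht _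
  rcases le_or_gt t δ⁻¹ with h | h
  · have hle := mul_le_mul_of_nonneg_left (Real.rpow_le_rpow (z := s - 1) ht h (by linarith)) ha
    have : 0 ≤ δ * t := mul_nonneg hδ.le ht
    nlinarith [mul_nonneg ha hpow]
  · have : 0 < δ * t - 1 := by rw [inv_lt_iff_one_lt_mul₀ hδ] at h; linarith
    have : 0 ≤ a * δ⁻¹ ^ (s - 1) := mul_nonneg ha (Real.rpow_nonneg (by positivity) _)
    nlinarith [mul_nonneg ha hpow]

lemma sub_le_penalizedRatio (ha : 0 ≤ a) (hs : 1 ≤ s) (hδ : 0 < δ) (ht : 0 < t)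
    (he : 0 ≤ e + a * t ^ s) :
    δ * (e + a * t ^ s) - a * δ⁻¹ ^ (s - 1) ≤ penalizedRatio a s δ e t := by
  linarith [add_mul_rpow_mul_sub_one_le_penalizedRatio (δ := δ) ht he,
    neg_mul_inv_rpow_le ha hs hδ ht.le]

lemma exists_div_le_add_div_add {e₁ e₂ t₁ t₂ : ℝ} (ht₁ : 0 ≤ t₁) (ht₂ : 0 ≤ t₂)
    (he₁ : t₁ = 0 → 0 ≤ e₁) (he₂ : t₂ = 0 → 0 ≤ e₂) (ht : 0 < t₁ + t₂) :
    (0 < t₁ ∧ e₁ / t₁ ≤ (e₁ + e₂) / (t₁ + t₂)) ∨ (0 < t₂ ∧ e₂ / t₂ ≤ (e₁ + e₂) / (t₁ + t₂)) := by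
  rcases ht₁.eq_or_lt with h₁ | h₁
  · subst h₁
    have : e₂ / t₂ ≤ (e₁ + e₂) / t₂ := by gcongr; linarith [he₁ rfl]
    exact .inr ⟨by simpa using ht, by simpa using this⟩
  rcases ht₂.eq_or_lt with h₂ | h₂
  · subst h₂
    have : e₁ / t₁ ≤ (e₁ + e₂) / t₁ := by gcongr; linarith [he₂ rfl]
    exact .inl ⟨h₁, by simpa using this⟩
  rcases le_total (e₁ * t₂) (e₂ * t₁) with h | h
  · exact .inl ⟨h₁, by rw [div_le_div_iff₀ h₁ ht]; linarith⟩
  · exact .inr ⟨h₂, by rw [div_le_div_iff₀ h₂ ht]; linarith⟩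

/-- Strict subadditivity: splitting `(e, t)` into two pieces of positive energy lowers `j_δ`
on one of them. -/
lemma penalizedRatio_lt_add_or {e₁ e₂ t₁ t₂ : ℝ} (ha : 0 ≤ a) (hs : 1 ≤ s) (hδ : 0 < δ)
    (ht₁ : 0 ≤ t₁) (ht₂ : 0 ≤ t₂) (ht : 0 < t₁ + t₂)
    (he₁ : 0 < e₁ + a * t₁ ^ s) (he₂ : 0 < e₂ + a * t₂ ^ s) :
    (0 < t₁ ∧ penalizedRatio a s δ e₁ t₁ < penalizedRatio a s δ (e₁ + e₂) (t₁ + t₂)) ∨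
    (0 < t₂ ∧ penalizedRatio a s δ e₂ t₂ < penalizedRatio a s δ (e₁ + e₂) (t₁ + t₂)) := by
  have hsup := mul_le_mul_of_nonneg_left (Real.add_rpow_le_rpow_add ht₁ ht₂ hs) ha
  have hp₁ : 0 ≤ a * t₁ ^ s := mul_nonneg ha (Real.rpow_nonneg ht₁ s)
  have hp₂ : 0 ≤ a * t₂ ^ s := mul_nonneg ha (Real.rpow_nonneg ht₂ s)
  have hδ₁ : δ * (e₁ + 2 * a * t₁ ^ s) < δ * (e₁ + e₂ + 2 * a * (t₁ + t₂) ^ s) :=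
    mul_lt_mul_of_pos_left (by linarith) hδ
  have hδ₂ : δ * (e₂ + 2 * a * t₂ ^ s) < δ * (e₁ + e₂ + 2 * a * (t₁ + t₂) ^ s) :=
    mul_lt_mul_of_pos_left (by linarith) hδ
  have hzero : ∀ {e' t' : ℝ}, 0 < e' + a * t' ^ s → t' = 0 → 0 ≤ e' := fun he' h => by
    rw [h, Real.zero_rpow (by linarith), mul_zero, add_zero] at he'
    exact he'.le
  rcases exists_div_le_add_div_add ht₁ ht₂ (hzero he₁) (hzero he₂) ht with ⟨h, hdiv⟩ | ⟨h, hdiv⟩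
  · exact .inl ⟨h, by simp only [penalizedRatio]; linarith⟩
  · exact .inr ⟨h, by simp only [penalizedRatio]; linarith⟩

lemma exists_pos_penalizedRatio_lt {Λ : ℝ} (h : e / t < Λ) :
    ∃ δbar > 0, ∀ δ, 0 < δ → δ < δbar → penalizedRatio a s δ e t < Λ := by
  set K := e + 2 * a * t ^ s
  refine ⟨(Λ - e / t) / (|K| + 1), by positivity, fun δ hδ hδbar => ?_⟩
  rw [lt_div_iff₀ (by positivity)] at hδbar
  have := mul_le_mul_of_nonneg_left (le_abs_self K) hδ.le
  simp only [penalizedRatio]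
  nlinarith

lemma Filter.Tendsto.penalizedRatio {α : Type*} {l : Filter α} {f g : α → ℝ}
    (hf : Tendsto f l (𝓝 e)) (hg : Tendsto g l (𝓝 t)) (ht : t ≠ 0) :
    Tendsto (fun x => penalizedRatio a s δ (f x) (g x)) l (𝓝 (penalizedRatio a s δ e t)) :=
  (hf.div hg ht).add ((hf.add ((hg.rpow_const (.inl ht)).const_mul (2 * a))).const_mul δ)

lemma tendsto_penalizedRatio_zero_of_tendsto_atTop {α : Type*} {l : Filter α} {f g : α → ℝ}
    (hf : Tendsto f l (𝓝 e)) (hg : Tendsto g l atTop) :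
    Tendsto (fun x => penalizedRatio 0 s δ (f x) (g x)) l (𝓝 (δ * e)) := by
  simpa [penalizedRatio] using (hf.div_atTop hg).add (hf.const_mul δ)

lemma tendsto_penalizedRatio_atTop {α : Type*} {l : Filter α} {f g : α → ℝ} (ha : 0 < a)
    (hs : 1 ≤ s) (hδ : 0 < δ) (hf : ∀ x, 0 ≤ f x + a * g x ^ s) (hg : Tendsto g l atTop) :
    Tendsto (fun x => penalizedRatio a s δ (f x) (g x)) l atTop := by
  refine tendsto_atTop_mono' l ?_
    ((tendsto_atTop_add_const_right l (-1) (hg.const_mul_atTop hδ)).const_mul_atTop ha)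
  filter_upwards [hg.eventually_ge_atTop 1, hg.eventually_ge_atTop δ⁻¹] with x h₁ h₂
  have hδg : 0 ≤ δ * g x - 1 := by rw [inv_le_iff_one_le_mul₀ hδ] at h₂; linarith
  have hpow := mul_le_mul_of_nonneg_right (Real.one_le_rpow h₁ (by linarith : 0 ≤ s - 1)) hδg
  have := add_mul_rpow_mul_sub_one_le_penalizedRatio (δ := δ) (by linarith) (hf x)
  nlinarith [mul_nonneg hδ.le (hf x)]

end PenalizedRatio

lemma exists_seq_tendsto_sInf_image {α : Type*} {f : α → ℝ} {S : Set α} (hS : S.Nonempty)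
    (hf : BddBelow (f '' S)) :
    ∃ u : ℕ → α, (∀ n, u n ∈ S) ∧ Tendsto (fun n => f (u n)) atTop (𝓝 (sInf (f '' S))) := by
  obtain ⟨v, -, hv, hvS⟩ := exists_seq_tendsto_sInf (hS.image f) hf
  choose u hu hfu using hvS
  exact ⟨u, hu, by simpa only [hfu] using hv⟩

lemma exists_gap_of_iInf_lt_iSup_iInf {α : Type*} {P : α → Prop} {q p : α → ℝ}
    (h : (⨅ u : {u // P u}, (q u.1 : EReal)) <
      ⨆ (r : ℝ) (_ : 0 < r), ⨅ u : {u // P u ∧ p u < r}, (q u.1 : EReal)) :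
    ∃ u₀, P u₀ ∧ ∃ Λ : ℝ, q u₀ < Λ ∧ ∃ r > 0, ∀ u, P u → p u < r → Λ < q u := by
  obtain ⟨⟨u₀, hu₀⟩, hlt⟩ := iInf_lt_iff.1 h
  obtain ⟨Λ, h₁, h₂⟩ := EReal.exists_between_coe_real hlt
  obtain ⟨r, hr⟩ := lt_iSup_iff.1 h₂
  obtain ⟨hr₀, hr⟩ := lt_iSup_iff.1 hr
  exact ⟨u₀, hu₀, Λ, by exact_mod_cast h₁, r, hr₀, fun u hu hpu => by
    exact_mod_cast hr.trans_le
      (iInf_le (fun v : {v // P v ∧ p v < r} => (q v.1 : EReal)) ⟨u, hu, hpu⟩)⟩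

section WeakConvergence

variable {X : Type*} [NormedAddCommGroup X] [NormedSpace ℝ X]

def TendstoWeakly (u : ℕ → X) (x : X) : Prop :=
  ∀ f : X →L[ℝ] ℝ, Tendsto (fun n => f (u n)) atTop (𝓝 (f x))

lemma TendstoWeakly.comp {u : ℕ → X} {x : X} (hu : TendstoWeakly u x) {ψ : ℕ → ℕ}
    (hψ : Tendsto ψ atTop atTop) : TendstoWeakly (u ∘ ψ) x :=
  fun f => (hu f).comp hψ

lemma TendstoWeakly.eq_of_tendsto {u : ℕ → X} {x y : X} (hw : TendstoWeakly u x)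
    (hs : Tendsto u atTop (𝓝 y)) : x = y :=
  (SeparatingDual.eq_iff_forall_dual_eq (R := ℝ)).2 fun f =>
    tendsto_nhds_unique (hw f) ((f.continuous.tendsto y).comp hs)

lemma SplittingProperty.tendsto_sub {Φ : X → ℝ} (hΦ : SplittingProperty Φ) {u : ℕ → X} {x : X}
    (hu : TendstoWeakly u x) :
    Tendsto (fun n => Φ (u n - x) - (Φ (u n) - Φ x)) atTop (𝓝 0) := by
  have hw : ∀ f : X →L[ℝ] ℝ, Tendsto (fun n => f (u n - x)) atTop (𝓝 0) := fun f => by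
    simpa only [map_sub, sub_self] using (hu f).sub_const (f x)
  have := (hΦ x _ hw).neg
  rw [neg_zero] at this
  refine this.congr fun n => ?_
  simp only [add_sub_cancel]
  ring

lemma SplittingProperty.tendsto_sub_of_tendsto {Φ : X → ℝ} (hΦ : SplittingProperty Φ)
    {u : ℕ → X} {x : X} (hu : TendstoWeakly u x) {c : ℝ}
    (hc : Tendsto (fun n => Φ (u n)) atTop (𝓝 c)) :
    Tendsto (fun n => Φ (u n - x)) atTop (𝓝 (c - Φ x)) := by
  simpa using (hΦ.tendsto_sub hu).add (hc.sub_const (Φ x))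

lemma SplittingProperty.tendsto_sub_atTop {Φ : X → ℝ} (hΦ : SplittingProperty Φ)
    {u : ℕ → X} {x : X} (hu : TendstoWeakly u x)
    (hc : Tendsto (fun n => Φ (u n)) atTop atTop) :
    Tendsto (fun n => Φ (u n - x)) atTop atTop := by
  refine ((tendsto_atTop_add_const_right atTop (-Φ x) hc).atTop_add
    (hΦ.tendsto_sub hu)).congr fun n => ?_
  ring

end WeakConvergence

section Energy

variable {X F : Type*} [NormedAddCommGroup F] {E : X → ℝ} {C : X → F} {a s δ m : ℝ}

lemma bddBelow_penalizedRatio (hcoer₁ : ∀ u : X, 0 ≤ E u + a * ‖C u‖ ^ s) (ha : 0 ≤ a)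
    (hs : 1 ≤ s) (hδ : 0 < δ) :
    BddBelow ((fun u => penalizedRatio a s δ (E u) ‖C u‖) '' {u | C u ≠ 0}) := by
  refine ⟨-(a * δ⁻¹ ^ (s - 1)), ?_⟩
  rintro _ ⟨u, hu, rfl⟩
  linarith [sub_le_penalizedRatio ha hs hδ (norm_pos_iff.2 hu) (hcoer₁ u),
    mul_nonneg hδ.le (hcoer₁ u)]

lemma exists_subseq_tendsto_energy_norm (hcoer₁ : ∀ u : X, 0 ≤ E u + a * ‖C u‖ ^ s)
    (ha : 0 ≤ a) (hs : 0 ≤ s) {y : ℕ → X} {B : ℝ} (hB : ∀ n, E (y n) + a * ‖C (y n)‖ ^ s ≤ B)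
    (ht : ¬Tendsto (fun n => ‖C (y n)‖) atTop atTop) :
    ∃ ψ : ℕ → ℕ, StrictMono ψ ∧ ∃ e τ : ℝ, Tendsto (fun n => E (y (ψ n))) atTop (𝓝 e) ∧
      Tendsto (fun n => ‖C (y (ψ n))‖) atTop (𝓝 τ) := by
  obtain ⟨M, hM⟩ : ∃ M, ∃ᶠ n in atTop, ‖C (y n)‖ < M := by
    simpa [tendsto_atTop, not_eventually, frequently_atTop] using ht
  have hbdd := (Metric.isBounded_Icc (-(a * M ^ s)) B).prod (Metric.isBounded_Icc 0 M)
  have hmem : ∃ᶠ n in atTop,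
      (E (y n), ‖C (y n)‖) ∈ Set.Icc (-(a * M ^ s)) B ×ˢ Set.Icc 0 M := hM.mono fun n hn => by
    have := mul_le_mul_of_nonneg_left (Real.rpow_le_rpow (norm_nonneg _) hn.le hs) ha
    have := mul_nonneg ha (Real.rpow_nonneg (norm_nonneg (C (y n))) s)
    exact ⟨⟨by linarith [hcoer₁ (y n)], by linarith [hB n]⟩, norm_nonneg _, hn.le⟩
  obtain ⟨⟨e, τ⟩, -, ψ, hψ, hlim⟩ := tendsto_subseq_of_frequently_bounded hbdd hmem
  exact ⟨ψ, hψ, e, τ, hlim.fst_nhds, hlim.snd_nhds⟩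

lemma energy_le_of_charge_eq (hδ : 0 ≤ δ)
    (hmin : ∀ u, C u ≠ 0 → m ≤ penalizedRatio a s δ (E u) ‖C u‖)
    {x : X} (hx : C x ≠ 0) (hJx : penalizedRatio a s δ (E x) ‖C x‖ = m) {u : X}
    (hu : C u = C x) : E x ≤ E u := by
  have := hmin u (hu ▸ hx)
  rw [hu, ← hJx] at this
  exact (penalizedRatio_strictMono hδ (norm_pos_iff.2 hx)).le_iff_le.1 this

variable [NormedAddCommGroup X] {G : Type*} [Group G] [MulAction G X]

lemma eq_zero_of_energy_eq_zero
    (hcoer₃ : ∀ u : ℕ → X, Tendsto (fun n => E (u n) + a * ‖C (u n)‖ ^ s) atTop (𝓝 0) →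
      Tendsto u atTop (𝓝 0))
    {x : X} (hx : E x + a * ‖C x‖ ^ s = 0) : x = 0 :=
  tendsto_nhds_unique tendsto_const_nhds
    (hcoer₃ (fun _ => x) (by rw [hx]; exact tendsto_const_nhds))

lemma energy_pos_of_ne_zero (hcoer₁ : ∀ u : X, 0 ≤ E u + a * ‖C u‖ ^ s)
    (hcoer₃ : ∀ u : ℕ → X, Tendsto (fun n => E (u n) + a * ‖C (u n)‖ ^ s) atTop (𝓝 0) →
      Tendsto u atTop (𝓝 0))
    {x : X} (hx : x ≠ 0) : 0 < E x + a * ‖C x‖ ^ s :=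
  (hcoer₁ x).lt_of_ne fun h => hx (eq_zero_of_energy_eq_zero hcoer₃ h.symm)

lemma exists_norm_le_of_energy_le
    (hcoer₂ : ∀ u : ℕ → X, Tendsto (fun n => ‖u n‖) atTop atTop →
      Tendsto (fun n => E (u n) + a * ‖C (u n)‖ ^ s) atTop atTop)
    {u : ℕ → X} {B : ℝ} (hB : ∀ n, E (u n) + a * ‖C (u n)‖ ^ s ≤ B) : ∃ R, ∀ n, ‖u n‖ ≤ R := by
  by_contra! h
  choose k hk using h
  have hu : Tendsto (fun j : ℕ => ‖u (k j)‖) atTop atTop :=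
    tendsto_atTop_mono (fun j => (hk j).le) tendsto_natCast_atTop_atTop
  obtain ⟨j, hj⟩ := ((hcoer₂ _ hu).eventually_gt_atTop B).exists
  exact (hB (k j)).not_gt hj

lemma gCompactSet_setOf_charge_eq_energy_eq (hEcont : Continuous E) (hCcont : Continuous C)
    (hEG : ∀ (g : G) (u : X), E (g • u) = E u) (hCG : ∀ (g : G) (u : X), C (g • u) = C u)
    (hcompact : ∀ u : ℕ → X, (∀ n, C (u n) ≠ 0) →
      Tendsto (fun n => penalizedRatio a s δ (E (u n)) ‖C (u n)‖) atTop (𝓝 m) →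
      GCompactSeq (G := G) u)
    {x : X} (hx : C x ≠ 0) (hJx : penalizedRatio a s δ (E x) ‖C x‖ = m) :
    GCompactSet (G := G) {u | C u = C x ∧ E u = E x} := by
  refine ⟨(isClosed_eq hCcont continuous_const).inter (isClosed_eq hEcont continuous_const),
    fun g u hu => ⟨(hCG g u).trans hu.1, (hEG g u).trans hu.2⟩,
    fun u hu => hcompact u (fun n => (hu n).1 ▸ hx) (tendsto_const_nhds.congr fun n => ?_)⟩
  rw [(hu n).1, (hu n).2, hJx]

end Energy

section Compactness

variable {X G F : Type*} [NormedAddCommGroup X] [NormedSpace ℝ X] [Group G] [MulAction G X]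
  [NormedAddCommGroup F] {E : X → ℝ} {C : X → F} {a s δ m : ℝ}

/-- For `a = 0`, `j_δ(e, t) → δ e` as `t → ∞`; the remainder `y n - x` would then bring `J_δ`
below `m` by `δ E x > 0`. -/
lemma not_tendsto_norm_atTop_of_coeff_eq_zero (hEsplit : SplittingProperty E)
    (hCsplit : SplittingProperty fun u => ‖C u‖) (hcoer₁ : ∀ u : X, 0 ≤ E u + a * ‖C u‖ ^ s)
    (hcoer₃ : ∀ u : ℕ → X, Tendsto (fun n => E (u n) + a * ‖C (u n)‖ ^ s) atTop (𝓝 0) →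
      Tendsto u atTop (𝓝 0))
    (ha : a = 0) (hmin : ∀ u, C u ≠ 0 → m ≤ penalizedRatio a s δ (E u) ‖C u‖)
    (hδ : 0 < δ) {y : ℕ → X} {x : X} (hy : TendstoWeakly y x) (hx : x ≠ 0)
    (hJ : Tendsto (fun n => penalizedRatio a s δ (E (y n)) ‖C (y n)‖) atTop (𝓝 m))
    {B : ℝ} (hB : ∀ n, E (y n) + a * ‖C (y n)‖ ^ s ≤ B) :
    ¬Tendsto (fun n => ‖C (y n)‖) atTop atTop := by
  intro ht
  subst ha
  obtain ⟨e, -, ψ, hψ, he⟩ := (isCompact_Icc (a := 0) (b := B)).tendsto_subseq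
    (x := fun n => E (y n)) fun n => ⟨by simpa using hcoer₁ (y n), by simpa using hB n⟩
  have hψ' := hψ.tendsto_atTop
  have hm : m = δ * e := tendsto_nhds_unique (hJ.comp hψ')
    (tendsto_penalizedRatio_zero_of_tendsto_atTop he (ht.comp hψ'))
  have hEw := hEsplit.tendsto_sub_of_tendsto (hy.comp hψ') he
  have hCw := hCsplit.tendsto_sub_atTop (hy.comp hψ') (ht.comp hψ')
  have hle : m ≤ δ * (e - E x) :=
    ge_of_tendsto (tendsto_penalizedRatio_zero_of_tendsto_atTop hEw hCw)
      ((hCw.eventually_gt_atTop 0).mono fun n hn => hmin _ (norm_pos_iff.1 hn))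
  have hEx := energy_pos_of_ne_zero hcoer₁ hcoer₃ hx
  simp only [zero_mul, add_zero] at hEx
  nlinarith

lemma not_tendsto_norm_atTop (hEsplit : SplittingProperty E)
    (hCsplit : SplittingProperty fun u => ‖C u‖) (hcoer₁ : ∀ u : X, 0 ≤ E u + a * ‖C u‖ ^ s)
    (hcoer₃ : ∀ u : ℕ → X, Tendsto (fun n => E (u n) + a * ‖C (u n)‖ ^ s) atTop (𝓝 0) →
      Tendsto u atTop (𝓝 0))
    (ha : 0 ≤ a) (hs : 1 ≤ s) (hmin : ∀ u, C u ≠ 0 → m ≤ penalizedRatio a s δ (E u) ‖C u‖)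
    (hδ : 0 < δ) {y : ℕ → X} {x : X} (hy : TendstoWeakly y x) (hx : x ≠ 0)
    (hJ : Tendsto (fun n => penalizedRatio a s δ (E (y n)) ‖C (y n)‖) atTop (𝓝 m))
    {B : ℝ} (hB : ∀ n, E (y n) + a * ‖C (y n)‖ ^ s ≤ B) :
    ¬Tendsto (fun n => ‖C (y n)‖) atTop atTop := by
  rcases ha.eq_or_lt with ha | ha
  · exact not_tendsto_norm_atTop_of_coeff_eq_zero hEsplit hCsplit hcoer₁ hcoer₃ ha.symm hmin hδ
      hy hx hJ hB
  · exact fun ht => not_tendsto_atTop_of_tendsto_nhds hJ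
      (tendsto_penalizedRatio_atTop ha hs hδ (fun n => hcoer₁ (y n)) ht)

lemma not_tendsto_norm_nhds_zero (hcoer₁ : ∀ u : X, 0 ≤ E u + a * ‖C u‖ ^ s)
    (hcoer₃ : ∀ u : ℕ → X, Tendsto (fun n => E (u n) + a * ‖C (u n)‖ ^ s) atTop (𝓝 0) →
      Tendsto u atTop (𝓝 0))
    (ha : 0 ≤ a) (hs : 0 < s) (hδ : 0 ≤ δ) {y : ℕ → X} {x : X} (hy : TendstoWeakly y x)
    (hx : x ≠ 0) (hCy : ∀ n, C (y n) ≠ 0)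
    (hJ : Tendsto (fun n => penalizedRatio a s δ (E (y n)) ‖C (y n)‖) atTop (𝓝 m))
    {e : ℝ} (hE : Tendsto (fun n => E (y n)) atTop (𝓝 e)) :
    ¬Tendsto (fun n => ‖C (y n)‖) atTop (𝓝 0) := by
  intro ht
  have hen : Tendsto (fun n => E (y n) + a * ‖C (y n)‖ ^ s) atTop (𝓝 e) := by
    simpa [Real.zero_rpow hs.ne'] using hE.add ((ht.rpow_const (.inr hs.le)).const_mul a)
  rcases (ge_of_tendsto' hen fun n => hcoer₁ (y n)).eq_or_lt with he | he
  · rw [← he] at hen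
    exact hx (hy.eq_of_tendsto (hcoer₃ y hen))
  · have ht' : Tendsto (fun n => ‖C (y n)‖) atTop (𝓝[>] 0) :=
      tendsto_nhdsWithin_of_tendsto_nhds_of_eventually_within _ ht
        (.of_forall fun n => norm_pos_iff.2 (hCy n))
    have hdiv : Tendsto (fun n => E (y n) / ‖C (y n)‖) atTop atTop := by
      simp only [div_eq_mul_inv]
      exact hE.pos_mul_atTop he (tendsto_inv_nhdsGT_zero.comp ht')
    exact not_tendsto_atTop_of_tendsto_nhds hJ (tendsto_atTop_mono
      (fun n => div_le_penalizedRatio ha hδ (norm_nonneg _) (hcoer₁ _)) hdiv)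

/-- The remainder `y n - x` carries no energy in the limit: otherwise strict subadditivity of
`j_δ` would put one of `x`, `y n - x` strictly below the infimum `m`. -/
lemma tendsto_energy_sub_zero (hEsplit : SplittingProperty E)
    (hCsplit : SplittingProperty fun u => ‖C u‖) (hcoer₁ : ∀ u : X, 0 ≤ E u + a * ‖C u‖ ^ s)
    (hcoer₃ : ∀ u : ℕ → X, Tendsto (fun n => E (u n) + a * ‖C (u n)‖ ^ s) atTop (𝓝 0) →
      Tendsto u atTop (𝓝 0))
    (ha : 0 ≤ a) (hs : 1 ≤ s) (hmin : ∀ u, C u ≠ 0 → m ≤ penalizedRatio a s δ (E u) ‖C u‖)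
    (hδ : 0 < δ) {y : ℕ → X} {x : X} (hy : TendstoWeakly y x) (hx : x ≠ 0) {e τ : ℝ}
    (hE : Tendsto (fun n => E (y n)) atTop (𝓝 e)) (ht : Tendsto (fun n => ‖C (y n)‖) atTop (𝓝 τ))
    (hτ : 0 < τ) (hm : m = penalizedRatio a s δ e τ) :
    Tendsto (fun n => E (y n - x) + a * ‖C (y n - x)‖ ^ s) atTop (𝓝 0) := by
  have hEw := hEsplit.tendsto_sub_of_tendsto hy hE
  have hCw := hCsplit.tendsto_sub_of_tendsto hy ht
  have hen := hEw.add ((hCw.rpow_const (.inr (by linarith : (0 : ℝ) ≤ s))).const_mul a)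
  suffices hμ : e - E x + a * (τ - ‖C x‖) ^ s = 0 by rwa [hμ] at hen
  by_contra hne
  have hμ := (ge_of_tendsto' hen fun n => hcoer₁ _).lt_of_ne' hne
  have ht₂ : 0 ≤ τ - ‖C x‖ := ge_of_tendsto' hCw fun n => norm_nonneg _
  have hsplit := penalizedRatio_lt_add_or ha hs hδ (norm_nonneg (C x)) ht₂ (by linarith)
    (energy_pos_of_ne_zero hcoer₁ hcoer₃ hx) hμ
  rw [add_sub_cancel, add_sub_cancel, ← hm] at hsplit
  rcases hsplit with ⟨h₁, hlt⟩ | ⟨h₂, hlt⟩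
  · exact (hmin x (norm_pos_iff.1 h₁)).not_gt hlt
  · have hCw₀ : ∀ᶠ n in atTop, C (y n - x) ≠ 0 :=
      (hCw.eventually (eventually_gt_nhds h₂)).mono fun n hn => norm_pos_iff.1 hn
    exact hlt.not_ge
      (ge_of_tendsto (hEw.penalizedRatio hCw h₂.ne') (hCw₀.mono fun n hn => hmin _ hn))

lemma tendsto_minimizer_of_tendstoWeakly (hEcont : Continuous E) (hCcont : Continuous C)
    (hEsplit : SplittingProperty E)
    (hCsplit : SplittingProperty fun u => ‖C u‖) (hcoer₁ : ∀ u : X, 0 ≤ E u + a * ‖C u‖ ^ s)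
    (hcoer₃ : ∀ u : ℕ → X, Tendsto (fun n => E (u n) + a * ‖C (u n)‖ ^ s) atTop (𝓝 0) →
      Tendsto u atTop (𝓝 0))
    (ha : 0 ≤ a) (hs : 1 ≤ s) (hmin : ∀ u, C u ≠ 0 → m ≤ penalizedRatio a s δ (E u) ‖C u‖)
    (hδ : 0 < δ) {y : ℕ → X} {x : X} (hy : TendstoWeakly y x) (hx : x ≠ 0)
    (hCy : ∀ n, C (y n) ≠ 0)
    (hJ : Tendsto (fun n => penalizedRatio a s δ (E (y n)) ‖C (y n)‖) atTop (𝓝 m)) {e τ : ℝ}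
    (hE : Tendsto (fun n => E (y n)) atTop (𝓝 e)) (ht : Tendsto (fun n => ‖C (y n)‖) atTop (𝓝 τ)) :
    C x ≠ 0 ∧ penalizedRatio a s δ (E x) ‖C x‖ = m ∧ Tendsto y atTop (𝓝 x) := by
  have hτ : 0 < τ := (ge_of_tendsto' ht fun n => norm_nonneg _).lt_of_ne' fun h =>
    not_tendsto_norm_nhds_zero hcoer₁ hcoer₃ ha (by linarith) hδ.le hy hx hCy hJ hE (h ▸ ht)
  have hm : m = penalizedRatio a s δ e τ := tendsto_nhds_unique hJ (hE.penalizedRatio ht hτ.ne')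
  have hyx : Tendsto y atTop (𝓝 x) := by
    simpa using (hcoer₃ _ (tendsto_energy_sub_zero hEsplit hCsplit hcoer₁ hcoer₃ ha hs hmin hδ
      hy hx hE ht hτ hm)).add_const x
  have hEx : E x = e := tendsto_nhds_unique ((hEcont.tendsto x).comp hyx) hE
  have hCx : ‖C x‖ = τ :=
    tendsto_nhds_unique (((continuous_norm.comp hCcont).tendsto x).comp hyx) ht
  exact ⟨norm_pos_iff.1 (hCx ▸ hτ), by rw [hEx, hCx, hm], hyx⟩

variable (G) in
def IsAuxiliarySeminorm (p : Seminorm ℝ X) : Prop :=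
  ∀ u : ℕ → X, (∃ R : ℝ, ∀ n, ‖u n‖ ≤ R) → (∃ δ' > 0, ∀ n, δ' ≤ p (u n)) →
    ∃ φ : ℕ → ℕ, StrictMono φ ∧ ∃ g : ℕ → G, ∃ x : X, x ≠ 0 ∧
      TendstoWeakly (fun k => g k • u (φ k)) x

lemma exists_subseq_tendsto_minimizer (hEcont : Continuous E) (hCcont : Continuous C)
    (hEG : ∀ (g : G) (u : X), E (g • u) = E u) (hCG : ∀ (g : G) (u : X), C (g • u) = C u)
    (hEsplit : SplittingProperty E) (hCsplit : SplittingProperty fun u => ‖C u‖)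
    (hcoer₁ : ∀ u : X, 0 ≤ E u + a * ‖C u‖ ^ s)
    (hcoer₂ : ∀ u : ℕ → X, Tendsto (fun n => ‖u n‖) atTop atTop →
      Tendsto (fun n => E (u n) + a * ‖C (u n)‖ ^ s) atTop atTop)
    (hcoer₃ : ∀ u : ℕ → X, Tendsto (fun n => E (u n) + a * ‖C (u n)‖ ^ s) atTop (𝓝 0) →
      Tendsto u atTop (𝓝 0))
    (ha : 0 ≤ a) (hs : 1 ≤ s) {p : Seminorm ℝ X} (haux : IsAuxiliarySeminorm G p)
    (hmin : ∀ u, C u ≠ 0 → m ≤ penalizedRatio a s δ (E u) ‖C u‖) (hδ : 0 < δ)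
    {v : ℕ → X} (hCv : ∀ n, C (v n) ≠ 0)
    (hJv : Tendsto (fun n => penalizedRatio a s δ (E (v n)) ‖C (v n)‖) atTop (𝓝 m))
    {B r : ℝ} (hB : ∀ n, E (v n) + a * ‖C (v n)‖ ^ s ≤ B) (hr : 0 < r) (hp : ∀ n, r ≤ p (v n)) :
    ∃ φ : ℕ → ℕ, StrictMono φ ∧ ∃ (g : ℕ → G) (x : X), C x ≠ 0 ∧
      penalizedRatio a s δ (E x) ‖C x‖ = m ∧ Tendsto (fun k => g k • v (φ k)) atTop (𝓝 x) := by
  obtain ⟨R, hR⟩ := exists_norm_le_of_energy_le hcoer₂ hB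
  obtain ⟨φ, hφ, g, x, hx, hvx⟩ := haux v ⟨R, hR⟩ ⟨r, hr, hp⟩
  set y := fun k => g k • v (φ k)
  have hEy : ∀ k, E (y k) = E (v (φ k)) := fun k => hEG _ _
  have hCy : ∀ k, C (y k) = C (v (φ k)) := fun k => hCG _ _
  have hJy : Tendsto (fun k => penalizedRatio a s δ (E (y k)) ‖C (y k)‖) atTop (𝓝 m) := by
    simp only [hEy, hCy]
    exact hJv.comp hφ.tendsto_atTop
  have hBy : ∀ k, E (y k) + a * ‖C (y k)‖ ^ s ≤ B := fun k => by rw [hEy, hCy]; exact hB _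
  obtain ⟨ψ, hψ, e, τ, hE, ht⟩ := exists_subseq_tendsto_energy_norm hcoer₁ ha (by linarith) hBy
    (not_tendsto_norm_atTop hEsplit hCsplit hcoer₁ hcoer₃ ha hs hmin hδ hvx hx hJy hBy)
  obtain ⟨hCx, hJx, hyx⟩ := tendsto_minimizer_of_tendstoWeakly hEcont hCcont hEsplit hCsplit
    hcoer₁ hcoer₃ ha hs hmin hδ (hvx.comp hψ.tendsto_atTop) hx (fun k => hCy _ ▸ hCv _)
    (hJy.comp hψ.tendsto_atTop) hE ht
  exact ⟨φ ∘ ψ, hφ.comp hψ, g ∘ ψ, x, hCx, hJx, hyx⟩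

lemma exists_subseq_tendsto_minimizer_of_lt (hEcont : Continuous E) (hCcont : Continuous C)
    (hEG : ∀ (g : G) (u : X), E (g • u) = E u) (hCG : ∀ (g : G) (u : X), C (g • u) = C u)
    (hEsplit : SplittingProperty E) (hCsplit : SplittingProperty fun u => ‖C u‖)
    (hcoer₁ : ∀ u : X, 0 ≤ E u + a * ‖C u‖ ^ s)
    (hcoer₂ : ∀ u : ℕ → X, Tendsto (fun n => ‖u n‖) atTop atTop →
      Tendsto (fun n => E (u n) + a * ‖C (u n)‖ ^ s) atTop atTop)
    (hcoer₃ : ∀ u : ℕ → X, Tendsto (fun n => E (u n) + a * ‖C (u n)‖ ^ s) atTop (𝓝 0) →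
      Tendsto u atTop (𝓝 0))
    (ha : 0 ≤ a) (hs : 1 ≤ s) {p : Seminorm ℝ X} (haux : IsAuxiliarySeminorm G p)
    (hmin : ∀ u, C u ≠ 0 → m ≤ penalizedRatio a s δ (E u) ‖C u‖) (hδ : 0 < δ) {Λ r : ℝ}
    (hr : 0 < r) (hgap : ∀ u, C u ≠ 0 → p u < r → Λ < E u / ‖C u‖) (hmΛ : m < Λ)
    (u : ℕ → X) (hCu : ∀ n, C (u n) ≠ 0)
    (hJu : Tendsto (fun n => penalizedRatio a s δ (E (u n)) ‖C (u n)‖) atTop (𝓝 m)) :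
    ∃ φ : ℕ → ℕ, StrictMono φ ∧ ∃ (g : ℕ → G) (x : X), C x ≠ 0 ∧
      penalizedRatio a s δ (E x) ‖C x‖ = m ∧ Tendsto (fun k => g k • u (φ k)) atTop (𝓝 x) := by
  obtain ⟨N, hN⟩ := eventually_atTop.1 ((hJu.eventually (gt_mem_nhds hmΛ)).and
    (hJu.eventually (gt_mem_nhds (lt_add_one m))))
  have hp : ∀ n, r ≤ p (u (n + N)) := fun n => not_lt.1 fun hlt =>
    ((hgap _ (hCu _) hlt).trans_le (div_le_penalizedRatio ha hδ.le (norm_nonneg _)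
      (hcoer₁ _))).not_gt (hN (n + N) (Nat.le_add_left N n)).1
  have hB : ∀ n, E (u (n + N)) + a * ‖C (u (n + N))‖ ^ s ≤ (m + 1 + a * δ⁻¹ ^ (s - 1)) / δ :=
    fun n => by
      rw [le_div_iff₀ hδ]
      linarith [sub_le_penalizedRatio ha hs hδ (norm_pos_iff.2 (hCu (n + N))) (hcoer₁ (u (n + N))),
        (hN (n + N) (Nat.le_add_left N n)).2]
  obtain ⟨φ, hφ, g, x, hx⟩ := exists_subseq_tendsto_minimizer hEcont hCcont hEG hCG hEsplit
    hCsplit hcoer₁ hcoer₂ hcoer₃ ha hs haux hmin hδ (v := fun n => u (n + N)) (fun n => hCu _)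
    (hJu.comp (tendsto_add_atTop_nat N)) hB hr hp
  exact ⟨fun k => φ k + N, hφ.add_const N, g, x, hx⟩

end Compactness

theorem existence_of_constrained_minimizers_general {X G : Type*}
    [NormedAddCommGroup X] [NormedSpace ℝ X]
    [Group G] [MulAction G X] {l : ℕ}
    -- the functionals E and C
    (E : X → ℝ) (C : X → EuclideanSpace ℝ (Fin l))
    (hEcont : Continuous E) (hCcont : Continuous C)
    -- (EC-2)
    (hEG : ∀ (g : G) (u : X), E (g • u) = E u)
    (hCG : ∀ (g : G) (u : X), C (g • u) = C u)
    -- (EC-3): coercivity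
    (a s : ℝ) (ha : 0 ≤ a) (hs : 1 ≤ s)
    (hcoer₁ : ∀ u : X, 0 ≤ E u + a * ‖C u‖ ^ s)
    (hcoer₂ : ∀ u : ℕ → X, Tendsto (fun n => ‖u n‖) atTop atTop →
      Tendsto (fun n => E (u n) + a * ‖C (u n)‖ ^ s) atTop atTop)
    (hcoer₃ : ∀ u : ℕ → X,
      Tendsto (fun n => E (u n) + a * ‖C (u n)‖ ^ s) atTop (𝓝 0) →
      Tendsto u atTop (𝓝 0))
    -- (EC-4): splitting property
    (hEsplit : SplittingProperty E)
    (hCsplit : SplittingProperty (fun u => ‖C u‖))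
    -- the auxiliary seminorm
    (p : Seminorm ℝ X)
    (haux : ∀ u : ℕ → X, (∃ R : ℝ, ∀ n, ‖u n‖ ≤ R) →
      (∃ δ' > 0, ∀ n, δ' ≤ p (u n)) →
      ∃ φ : ℕ → ℕ, StrictMono φ ∧ ∃ g : ℕ → G, ∃ ubar : X, ubar ≠ 0 ∧
        ∀ f : X →L[ℝ] ℝ,
          Tendsto (fun k => f (g k • u (φ k))) atTop (𝓝 (f ubar)))
    -- Λ₀ and the hylomorphy condition
    (Λ₀ : EReal)
    (hΛ₀ : Λ₀ = ⨆ (r : ℝ) (_ : 0 < r),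
      ⨅ u : {u : X // C u ≠ 0 ∧ p u < r}, ((E u.1 / ‖C u.1‖ : ℝ) : EReal))
    (hhylo : (⨅ u : {u : X // C u ≠ 0}, ((E u.1 / ‖C u.1‖ : ℝ) : EReal)) < Λ₀) :
    ∃ δbar : ℝ, 0 < δbar ∧ ∀ δ : ℝ, 0 < δ → δ < δbar →
      ∃ m : ℝ,
        -- J_δ attains its infimum m on {u | C u ≠ 0}
        (∃ u : X, C u ≠ 0 ∧
          E u / ‖C u‖ + δ * (E u + 2 * a * ‖C u‖ ^ s) = m) ∧
        (∀ u : X, C u ≠ 0 →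
          m ≤ E u / ‖C u‖ + δ * (E u + 2 * a * ‖C u‖ ^ s)) ∧
        -- every minimizing sequence of J_δ is G-compact
        (∀ u : ℕ → X, (∀ n, C (u n) ≠ 0) →
          Tendsto (fun n => E (u n) / ‖C (u n)‖ +
            δ * (E (u n) + 2 * a * ‖C (u n)‖ ^ s)) atTop (𝓝 m) →
          GCompactSeq (G := G) u) ∧
        -- the constrained minimum e_δ at charge c_δ ≠ 0 exists and is attained,
        -- and the set Γ_δ of its minimizers is G-compact
        ∃ (eδ : ℝ) (cδ : EuclideanSpace ℝ (Fin l)), cδ ≠ 0 ∧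
          (∃ u : X, C u = cδ ∧ E u = eδ) ∧
          (∀ u : X, C u = cδ → eδ ≤ E u) ∧
          GCompactSet (G := G) {u : X | C u = cδ ∧ E u = eδ} ∧
          -- every element of Γ_δ minimizes J_δ
          (∀ u : X, C u = cδ → E u = eδ →
            E u / ‖C u‖ + δ * (E u + 2 * a * ‖C u‖ ^ s) = m) := by
  subst hΛ₀
  obtain ⟨u₀, hu₀, Λ, hu₀Λ, r, hr, hgap⟩ :=
    exists_gap_of_iInf_lt_iSup_iInf (q := fun u => E u / ‖C u‖) hhylo
  obtain ⟨δbar, hδbar, hJu₀⟩ := exists_pos_penalizedRatio_lt (a := a) (s := s) hu₀Λ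
  refine ⟨δbar, hδbar, fun δ hδ hδδbar => ?_⟩
  have hbdd := bddBelow_penalizedRatio hcoer₁ ha hs hδ
  set m := sInf ((fun u => penalizedRatio a s δ (E u) ‖C u‖) '' {u | C u ≠ 0})
  have hmin : ∀ u, C u ≠ 0 → m ≤ penalizedRatio a s δ (E u) ‖C u‖ :=
    fun u hu => csInf_le hbdd ⟨u, hu, rfl⟩
  have key := exists_subseq_tendsto_minimizer_of_lt hEcont hCcont hEG hCG hEsplit hCsplit hcoer₁
    hcoer₂ hcoer₃ ha hs haux hmin hδ hr hgap ((hmin u₀ hu₀).trans_lt (hJu₀ δ hδ hδδbar))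
  have hcompact : ∀ u : ℕ → X, (∀ n, C (u n) ≠ 0) →
      Tendsto (fun n => penalizedRatio a s δ (E (u n)) ‖C (u n)‖) atTop (𝓝 m) →
      GCompactSeq (G := G) u := fun u hu hJu =>
    let ⟨φ, hφ, g, x, _, _, hx⟩ := key u hu hJu
    ⟨φ, hφ, g, x, hx⟩
  obtain ⟨u, hu, hJu⟩ := exists_seq_tendsto_sInf_image ⟨u₀, hu₀⟩ hbdd
  obtain ⟨-, -, -, x, hx, hJx, -⟩ := key u hu hJu
  refine ⟨m, ⟨x, hx, hJx⟩, hmin, hcompact, E x, C x, hx, ⟨x, rfl, rfl⟩,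
    fun u hu => energy_le_of_charge_eq hδ.le hmin hx hJx hu,
    gCompactSet_setOf_charge_eq_energy_eq hEcont hCcont hEG hCG hcompact hx hJx,
    fun u hu he => ?_⟩
  rw [hu, he]
  exact hJx

/-- Theorem `furbo`: Under (EC-1)–(EC-4), the existence of an auxiliary
seminorm and the hylomorphy condition `inf E/|C| < Λ₀`, there is `δ̄ > 0` such that for
all `δ ∈ (0, δ̄)` the functional `J_δ u = E u / |C u| + δ (E u + 2 a |C u|^s)` attains
its infimum `m` on `{u | C u ≠ 0}`, every minimizing sequence of `J_δ` is `G`-compact,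
and there is a charge value `c_δ ≠ 0` such that `e_δ = min {E u | C u = c_δ}` exists
and is attained, the set `Γ_δ` of minimizers of `E` on `{u | C u = c_δ}` is
`G`-compact, and every element of `Γ_δ` minimizes `J_δ`. -/
theorem existence_of_constrained_minimizers {X G : Type*}
    [NormedAddCommGroup X] [NormedSpace ℝ X] [CompleteSpace X]
    [Group G] [MulAction G X] {l : ℕ}
    -- G is a group of linear isometries of X
    (hGlin : ∀ g : G, IsLinearMap ℝ (fun x : X => g • x))
    (hGnorm : ∀ (g : G) (x : X), ‖g • x‖ = ‖x‖)
    -- the functionals E and C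
    (E : X → ℝ) (C : X → EuclideanSpace ℝ (Fin l)) (hl : 1 ≤ l)
    (hEcont : Continuous E) (hCcont : Continuous C)
    -- (EC-1)
    (hE0 : E 0 = 0) (hC0 : C 0 = 0)
    -- (EC-2)
    (hEG : ∀ (g : G) (u : X), E (g • u) = E u)
    (hCG : ∀ (g : G) (u : X), C (g • u) = C u)
    -- (EC-3): coercivity
    (a s : ℝ) (ha : 0 ≤ a) (hs : 1 ≤ s)
    (hcoer₁ : ∀ u : X, 0 ≤ E u + a * ‖C u‖ ^ s)
    (hcoer₂ : ∀ u : ℕ → X, Tendsto (fun n => ‖u n‖) atTop atTop →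
      Tendsto (fun n => E (u n) + a * ‖C (u n)‖ ^ s) atTop atTop)
    (hcoer₃ : ∀ u : ℕ → X,
      Tendsto (fun n => E (u n) + a * ‖C (u n)‖ ^ s) atTop (𝓝 0) →
      Tendsto u atTop (𝓝 0))
    -- (EC-4): splitting property
    (hEsplit : SplittingProperty E)
    (hCsplit : SplittingProperty (fun u => ‖C u‖))
    -- the auxiliary seminorm
    (p : Seminorm ℝ X)
    (haux : ∀ u : ℕ → X, (∃ R : ℝ, ∀ n, ‖u n‖ ≤ R) →
      (∃ δ' > 0, ∀ n, δ' ≤ p (u n)) →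
      ∃ φ : ℕ → ℕ, StrictMono φ ∧ ∃ g : ℕ → G, ∃ ubar : X, ubar ≠ 0 ∧
        ∀ f : X →L[ℝ] ℝ,
          Tendsto (fun k => f (g k • u (φ k))) atTop (𝓝 (f ubar)))
    -- Λ₀ and the hylomorphy condition
    (Λ₀ : EReal)
    (hΛ₀ : Λ₀ = ⨆ (r : ℝ) (_ : 0 < r),
      ⨅ u : {u : X // C u ≠ 0 ∧ p u < r}, ((E u.1 / ‖C u.1‖ : ℝ) : EReal))
    (hhylo : (⨅ u : {u : X // C u ≠ 0}, ((E u.1 / ‖C u.1‖ : ℝ) : EReal)) < Λ₀) :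
    ∃ δbar : ℝ, 0 < δbar ∧ ∀ δ : ℝ, 0 < δ → δ < δbar →
      ∃ m : ℝ,
        -- J_δ attains its infimum m on {u | C u ≠ 0}
        (∃ u : X, C u ≠ 0 ∧
          E u / ‖C u‖ + δ * (E u + 2 * a * ‖C u‖ ^ s) = m) ∧
        (∀ u : X, C u ≠ 0 →
          m ≤ E u / ‖C u‖ + δ * (E u + 2 * a * ‖C u‖ ^ s)) ∧
        -- every minimizing sequence of J_δ is G-compact
        (∀ u : ℕ → X, (∀ n, C (u n) ≠ 0) →
          Tendsto (fun n => E (u n) / ‖C (u n)‖ +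
            δ * (E (u n) + 2 * a * ‖C (u n)‖ ^ s)) atTop (𝓝 m) →
          GCompactSeq (G := G) u) ∧
        -- the constrained minimum e_δ at charge c_δ ≠ 0 exists and is attained,
        -- and the set Γ_δ of its minimizers is G-compact
        ∃ (eδ : ℝ) (cδ : EuclideanSpace ℝ (Fin l)), cδ ≠ 0 ∧
          (∃ u : X, C u = cδ ∧ E u = eδ) ∧
          (∀ u : X, C u = cδ → eδ ≤ E u) ∧
          GCompactSet (G := G) {u : X | C u = cδ ∧ E u = eδ} ∧
          -- every element of Γ_δ minimizes J_δ
          (∀ u : X, C u = cδ → E u = eδ →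
            E u / ‖C u‖ + δ * (E u + 2 * a * ‖C u‖ ^ s) = m) :=
  existence_of_constrained_minimizers_general E C hEcont hCcont hEG hCG a s ha hs hcoer₁ hcoer₂
    hcoer₃ hEsplit hCsplit p haux Λ₀ hΛ₀ hhylo
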